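/- arXiv:1612.01205 — 3 statements merged into one kernel-verified Lean document; each statement's English description precedes it below -/
import Mathlib

section
/- (Bias of the SWITCH estimator.) Fix a reward kernel D with mean reward r*(x,a), a measurable reward model r̂ : X×A → ℝ, and a threshold τ > 0. On n i.i.d. samples from P_μ^D, the expectation of the SWITCH estimator satisfies E[v̂_SWITCH] − v^π(D) = E_π[ (r̂(x,a) − r*(x,a)) · 1(ρ(x,a) > τ) ], where E_π denotes expectation over x ∼ λ, a ∼ π(·|x). -/
open MeasureTheory ProbabilityTheory Real
open scoped ENNReal BigOperators Classical

/-!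
Each of the `n` samples contributes equally, so the expectation of the SWITCH estimator is the sum of
the expectations of its two one-sample terms under `P_μ^D`. Integrating out the reward turns the
importance-sampling term into `E_μ[ρ r* 1(ρ ≤ τ)] = E_π[r* 1(ρ ≤ τ)]`, since `μ ρ = π` by absolute
continuity. The direct-method term depends on the context only, whose marginal is `λ`, so its
expectation is `E_π[r̂ 1(ρ > τ)]`. Subtracting `v^π = E_π[r*]` and using
`1(ρ ≤ τ) = 1 - 1(ρ > τ)` leaves `E_π[(r̂ - r*) 1(ρ > τ)]`.
-/

/-- A policy assigns to each context a probability mass function over actions. -/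
structure Policy (X A : Type*) [MeasurableSpace X] [Fintype A] where
  prob : X → A → ℝ
  nonneg : ∀ x a, 0 ≤ prob x a
  sum_one : ∀ x, ∑ a, prob x a = 1
  meas : ∀ a, Measurable fun x => prob x a

variable {X A : Type*} [MeasurableSpace X] [Fintype A] [Nonempty A]
  [MeasurableSpace A] [MeasurableSingletonClass A]

/-- Importance weight ρ(x,a) = π(a|x)/μ(a|x). -/
noncomputable def impW (μp πp : Policy X A) (p : X × A) : ℝ :=
  πp.prob p.1 p.2 / μp.prob p.1 p.2

/-- E_μ[f] : expectation of f(x,a) for x ∼ λ, a ∼ μ(·|x). -/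
noncomputable def Emu (lam : Measure X) (μp : Policy X A) (f : X × A → ℝ) : ℝ :=
  ∫ x, ∑ a, μp.prob x a * f (x, a) ∂lam

/-- The distribution P_μ of (x,a) with x ∼ λ, a ∼ μ(·|x). -/
noncomputable def Policy.joint (lam : Measure X) (μp : Policy X A) : Measure (X × A) :=
  lam.bind fun x => Measure.sum fun a : A => ENNReal.ofReal (μp.prob x a) • Measure.dirac (x, a)

/-- Mean reward r*(x,a) of a reward kernel. -/
noncomputable def rstar (D : Kernel (X × A) ℝ) (p : X × A) : ℝ := ∫ r, r ∂(D p)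

/-- The value of the target policy π. -/
noncomputable def vpi (lam : Measure X) (πp : Policy X A) (D : Kernel (X × A) ℝ) : ℝ :=
  ∫ x, ∑ a, πp.prob x a * rstar D (x, a) ∂lam

/-- The joint distribution P_μ^D of ((x,a),r): x ∼ λ, a ∼ μ(·|x), r ∼ D(·|x,a). -/
noncomputable def sampleMeasure (lam : Measure X) (μp : Policy X A) (D : Kernel (X × A) ℝ) :
    Measure ((X × A) × ℝ) :=
  (Policy.joint lam μp).bind fun p => (D p).map fun r => (p, r)

/-- The class R(σ,Rmax) of reward kernels: Markov kernels with finite second moments such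
that P_μ-a.s. 0 ≤ r*(x,a) ≤ Rmax(x,a) and Var(r|x,a) ≤ σ(x,a)². -/
def InRewardClass (lam : Measure X) (μp : Policy X A) (σf Rmax : X × A → ℝ)
    (D : Kernel (X × A) ℝ) : Prop :=
  IsMarkovKernel D ∧ (∀ p, Integrable (fun r => r ^ 2) (D p)) ∧
    (∀ᵐ p ∂Policy.joint lam μp,
      0 ≤ rstar D p ∧ rstar D p ≤ Rmax p ∧ variance id (D p) ≤ σf p ^ 2)

/-- Minimax risk of off-policy evaluation from n i.i.d. samples. -/
noncomputable def minimaxRisk (lam : Measure X) (μp πp : Policy X A)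
    (σf Rmax : X × A → ℝ) (n : ℕ) : ℝ≥0∞ :=
  ⨅ (vhat : (Fin n → (X × A) × ℝ) → ℝ) (_ : Measurable vhat),
    ⨆ (D : Kernel (X × A) ℝ) (_ : InRewardClass lam μp σf Rmax D),
      ∫⁻ ω, ENNReal.ofReal ((vhat ω - vpi lam πp D) ^ 2)
        ∂(Measure.pi fun _ : Fin n => sampleMeasure lam μp D)

/-- E_π[f] : expectation of f(x,a) for x ∼ λ, a ∼ π(·|x). -/
noncomputable def Epi (lam : Measure X) (πp : Policy X A) (f : X × A → ℝ) : ℝ :=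
  ∫ x, ∑ a, πp.prob x a * f (x, a) ∂lam

/-- The SWITCH estimator with threshold τ and reward model r̂ on n samples. -/
noncomputable def switchEst (μp πp : Policy X A) (rhat : X × A → ℝ) (τ : ℝ) (n : ℕ)
    (ω : Fin n → (X × A) × ℝ) : ℝ :=
  (1 / n : ℝ) * ∑ i, (ω i).2 * impW μp πp (ω i).1 *
      (if impW μp πp (ω i).1 ≤ τ then 1 else 0)
    + (1 / n : ℝ) * ∑ i, ∑ a, rhat ((ω i).1.1, a) * πp.prob (ω i).1.1 a *
      (if τ < impW μp πp ((ω i).1.1, a) then 1 else 0)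

section

omit [Nonempty A] [MeasurableSingletonClass A]

variable {lam : Measure X} {μp πp : Policy X A} {D : Kernel (X × A) ℝ}

namespace Policy

lemma measurable_sum_smul_dirac (μp : Policy X A) :
    Measurable fun x =>
      Measure.sum fun a => ENNReal.ofReal (μp.prob x a) • Measure.dirac (x, a) := by
  refine Measure.measurable_of_measurable_coe _ fun s hs => ?_
  simp only [Measure.sum_apply _ hs, Measure.smul_apply, smul_eq_mul, tsum_fintype]
  exact Finset.measurable_sum _ fun a _ => (μp.meas a).ennreal_ofReal.mul
    ((Measure.measurable_coe hs).comp (Measure.measurable_dirac.comp measurable_prodMk_right))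

noncomputable def jointAt (lam : Measure X) (μp : Policy X A) (a : A) : Measure (X × A) :=
  (lam.withDensity fun x => ENNReal.ofReal (μp.prob x a)).map (·, a)

lemma joint_eq_sum_jointAt (lam : Measure X) (μp : Policy X A) :
    joint lam μp = Measure.sum (jointAt lam μp) := by
  ext s hs
  have hsa (a : A) : MeasurableSet ((·, a) ⁻¹' s : Set X) := measurable_prodMk_right hs
  rw [joint, Measure.bind_apply hs (measurable_sum_smul_dirac μp).aemeasurable,
    Measure.sum_apply _ hs, tsum_fintype]
  simp only [jointAt, Measure.sum_apply _ hs, Measure.smul_apply, smul_eq_mul, tsum_fintype,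
    Measure.map_apply measurable_prodMk_right hs, withDensity_apply _ (hsa _),
    Measure.dirac_apply' _ hs, ← lintegral_indicator (hsa _)]
  rw [← lintegral_finsetSum _ fun a _ => (μp.meas a).ennreal_ofReal.indicator (hsa a)]
  congr 1; ext x; congr 1; ext a
  by_cases h : (x, a) ∈ s <;> simp [h]

instance [SFinite lam] : SFinite (joint lam μp) := by
  rw [joint_eq_sum_jointAt]; unfold jointAt; infer_instance

lemma map_fst_joint (lam : Measure X) (μp : Policy X A) : (joint lam μp).map Prod.fst = lam := by
  rw [joint_eq_sum_jointAt, Measure.map_sum measurable_fst.aemeasurable]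
  simp only [jointAt, Measure.map_map measurable_fst measurable_prodMk_right, Function.comp_def,
    Measure.map_id']
  rw [← withDensity_tsum fun a => (μp.meas a).ennreal_ofReal]
  convert withDensity_one (μ := lam)
  ext x
  rw [ENNReal.tsum_apply, tsum_fintype, ← ENNReal.ofReal_sum_of_nonneg fun a _ => μp.nonneg x a,
    μp.sum_one, ENNReal.ofReal_one, Pi.one_apply]

instance [IsProbabilityMeasure lam] : IsProbabilityMeasure (joint lam μp) := by
  have : IsProbabilityMeasure ((joint lam μp).map Prod.fst) := by
    rw [map_fst_joint]; infer_instance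
  exact Measure.isProbabilityMeasure_of_map Prod.fst

variable [MeasurableSingletonClass A]

lemma integrable_jointAt_iff {g : X × A → ℝ} (a : A) :
    Integrable g (jointAt lam μp a) ↔ Integrable (fun x => μp.prob x a * g (x, a)) lam := by
  rw [jointAt, (measurableEmbedding_prod_mk_right a).integrable_map_iff,
    integrable_withDensity_iff_integrable_smul' (μp.meas a).ennreal_ofReal
      (ae_of_all _ fun _ => ENNReal.ofReal_lt_top)]
  simp only [Function.comp_def, ENNReal.toReal_ofReal (μp.nonneg _ a), smul_eq_mul]

lemma integral_jointAt (g : X × A → ℝ) (a : A) :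
    ∫ p, g p ∂jointAt lam μp a = ∫ x, μp.prob x a * g (x, a) ∂lam := by
  rw [jointAt, (measurableEmbedding_prod_mk_right a).integral_map,
    integral_withDensity_eq_integral_toReal_smul₀ (μp.meas a).ennreal_ofReal.aemeasurable
      (ae_of_all _ fun _ => ENNReal.ofReal_lt_top)]
  simp only [ENNReal.toReal_ofReal (μp.nonneg _ a), smul_eq_mul]

lemma integral_joint {g : X × A → ℝ} (hg : Integrable g (joint lam μp)) :
    ∫ p, g p ∂joint lam μp = Emu lam μp g := by
  rw [joint_eq_sum_jointAt] at hg ⊢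
  have hslice (a : A) : Integrable (fun x => μp.prob x a * g (x, a)) lam :=
    (integrable_jointAt_iff a).mp (hg.mono_measure (Measure.le_sum _ a))
  rw [integral_sum_measure hg, tsum_fintype, Emu, integral_finsetSum _ fun a _ => hslice a]
  simp only [integral_jointAt]

end Policy

lemma sampleMeasure_eq_compProd [SFinite lam] [IsSFiniteKernel D] :
    sampleMeasure lam μp D = Policy.joint lam μp ⊗ₘ D := by
  rw [Measure.compProd_eq_comp_prod, sampleMeasure]
  congr 1
  ext p s hs
  rw [Kernel.id_prod_apply' _ _ hs, Measure.map_apply measurable_prodMk_left hs]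

instance [IsProbabilityMeasure lam] [IsMarkovKernel D] :
    IsProbabilityMeasure (sampleMeasure lam μp D) := by
  rw [sampleMeasure_eq_compProd]; infer_instance

lemma integral_sampleMeasure [MeasurableSingletonClass A] [SFinite lam] [IsSFiniteKernel D]
    {f : (X × A) × ℝ → ℝ} (hf : Integrable f (sampleMeasure lam μp D)) :
    ∫ s, f s ∂sampleMeasure lam μp D = Emu lam μp fun p => ∫ r, f (p, r) ∂D p := by
  rw [sampleMeasure_eq_compProd] at hf ⊢
  rw [Measure.integral_compProd hf, Policy.integral_joint]
  rw [Measure.compProd] at hf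
  simpa using hf.integral_compProd

lemma measurePreserving_fst_fst_sampleMeasure [SFinite lam] [IsMarkovKernel D] :
    MeasurePreserving (fun s : (X × A) × ℝ => s.1.1) (sampleMeasure lam μp D) lam := by
  refine ⟨measurable_fst.fst, ?_⟩
  rw [sampleMeasure_eq_compProd,
    show (fun s : (X × A) × ℝ => s.1.1) = Prod.fst ∘ Prod.fst from rfl,
    ← Measure.map_map measurable_fst measurable_fst]
  change (Policy.joint lam μp ⊗ₘ D).fst.map Prod.fst = lam
  rw [Measure.fst_compProd, Policy.map_fst_joint]

lemma integral_comp_fst_fst_sampleMeasure [SFinite lam] [IsMarkovKernel D] {h : X → ℝ}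
    (hh : AEStronglyMeasurable h lam) :
    ∫ s, h s.1.1 ∂sampleMeasure lam μp D = ∫ x, h x ∂lam := by
  have hφ := measurePreserving_fst_fst_sampleMeasure (lam := lam) (μp := μp) (D := D)
  rw [← integral_map hφ.measurable.aemeasurable (by rw [hφ.map_eq]; exact hh), hφ.map_eq]

section SampleMean

variable {Ω : Type*} [MeasurableSpace Ω] {ν : Measure Ω} [IsProbabilityMeasure ν] {n : ℕ}
  {f : Ω → ℝ}

lemma integrable_sampleMean (hf : Integrable f ν) :
    Integrable (fun ω => (1 / n : ℝ) * ∑ i, f (ω i)) (Measure.pi fun _ : Fin n => ν) :=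
  (integrable_finsetSum _ fun _ _ => integrable_comp_eval hf).const_mul _

lemma integral_sampleMean (hn : n ≠ 0) (hf : Integrable f ν) :
    ∫ ω, (1 / n : ℝ) * ∑ i, f (ω i) ∂(Measure.pi fun _ : Fin n => ν) = ∫ x, f x ∂ν := by
  rw [integral_const_mul, integral_finsetSum _ fun _ _ => integrable_comp_eval hf]
  simp only [integral_comp_eval (μ := fun _ : Fin n => ν) hf.aestronglyMeasurable,
    Finset.sum_const, Finset.card_univ, Fintype.card_fin, nsmul_eq_mul]
  field_simp

end SampleMean

omit [MeasurableSpace A] in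
lemma prob_mul_impW_mul (habs : ∀ x a, 0 < πp.prob x a → 0 < μp.prob x a)
    (x : X) (a : A) (c : ℝ) :
    μp.prob x a * (impW μp πp (x, a) * c) = πp.prob x a * c := by
  rcases (μp.nonneg x a).eq_or_lt with hμ | hμ
  -- where `μ(a|x) = 0`, `ρ = π / 0` is a junk value, but absolute continuity forces `π(a|x) = 0`
  · have hπ : πp.prob x a = 0 :=
      (πp.nonneg x a).eq_or_lt.resolve_right (fun h => (habs x a h).ne hμ) |>.symm
    simp [← hμ, hπ]
  · rw [impW]; field_simp

omit [MeasurableSpace A] in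
lemma emu_impW_mul_eq_epi (habs : ∀ x a, 0 < πp.prob x a → 0 < μp.prob x a) (g : X × A → ℝ) :
    Emu lam μp (fun p => impW μp πp p * g p) = Epi lam πp g := by
  simp only [Emu, Epi, prob_mul_impW_mul habs]

omit [MeasurableSpace A] in
lemma epi_add_sub {f g h : X × A → ℝ}
    (hf : Integrable (fun x => ∑ a, πp.prob x a * f (x, a)) lam)
    (hg : Integrable (fun x => ∑ a, πp.prob x a * g (x, a)) lam)
    (hh : Integrable (fun x => ∑ a, πp.prob x a * h (x, a)) lam) :
    (Epi lam πp fun p => f p + g p - h p) = Epi lam πp f + Epi lam πp g - Epi lam πp h := by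
  simp only [Epi, mul_sub, mul_add, Finset.sum_add_distrib, Finset.sum_sub_distrib]
  rw [← integral_add hf hg]
  exact integral_sub (hf.add hg) hh

variable {rhat : X × A → ℝ} {τ : ℝ}

noncomputable def ipsTerm (μp πp : Policy X A) (τ : ℝ) (s : (X × A) × ℝ) : ℝ :=
  s.2 * impW μp πp s.1 * (if impW μp πp s.1 ≤ τ then 1 else 0)

noncomputable def dmTerm (μp πp : Policy X A) (rhat : X × A → ℝ) (τ : ℝ) (x : X) : ℝ :=
  ∑ a, rhat (x, a) * πp.prob x a * (if τ < impW μp πp (x, a) then 1 else 0)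

lemma integral_switchEst {ν : Measure ((X × A) × ℝ)} [IsProbabilityMeasure ν] {n : ℕ}
    (hn : n ≠ 0) (hips : Integrable (ipsTerm μp πp τ) ν)
    (hdm : Integrable (fun s => dmTerm μp πp rhat τ s.1.1) ν) :
    ∫ ω, switchEst μp πp rhat τ n ω ∂(Measure.pi fun _ : Fin n => ν)
      = ∫ s, ipsTerm μp πp τ s ∂ν + ∫ s, dmTerm μp πp rhat τ s.1.1 ∂ν := by
  rw [← integral_sampleMean hn hips, ← integral_sampleMean hn hdm,
    ← integral_add (integrable_sampleMean hips) (integrable_sampleMean hdm)]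
  rfl

lemma integral_ipsTerm [MeasurableSingletonClass A] [SFinite lam] [IsSFiniteKernel D]
    (habs : ∀ x a, 0 < πp.prob x a → 0 < μp.prob x a)
    (hips : Integrable (ipsTerm μp πp τ) (sampleMeasure lam μp D)) :
    ∫ s, ipsTerm μp πp τ s ∂sampleMeasure lam μp D
      = Epi lam πp fun p => rstar D p * (if impW μp πp p ≤ τ then 1 else 0) := by
  rw [integral_sampleMeasure hips, ← emu_impW_mul_eq_epi habs]
  congr 1; ext p
  simp only [ipsTerm, rstar, ← integral_mul_const, ← integral_const_mul]
  congr 1; ext r; ring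

omit [MeasurableSpace A] in
lemma dmTerm_eq (x : X) :
    dmTerm μp πp rhat τ x
      = ∑ a, πp.prob x a * (rhat (x, a) * if τ < impW μp πp (x, a) then 1 else 0) :=
  Finset.sum_congr rfl fun a _ => by ring

lemma integrable_dmTerm [SFinite lam] [IsMarkovKernel D]
    (hdm : Integrable (fun x => ∑ a, πp.prob x a *
      (rhat (x, a) * (if τ < impW μp πp (x, a) then 1 else 0))) lam) :
    Integrable (fun s => dmTerm μp πp rhat τ s.1.1) (sampleMeasure lam μp D) :=
  (measurePreserving_fst_fst_sampleMeasure (μp := μp) (D := D)).integrable_comp_of_integrable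
    (g := dmTerm μp πp rhat τ) (hdm.congr (ae_of_all _ fun x => (dmTerm_eq x).symm))

lemma integral_dmTerm [SFinite lam] [IsMarkovKernel D]
    (hdm : Integrable (fun x => ∑ a, πp.prob x a *
      (rhat (x, a) * (if τ < impW μp πp (x, a) then 1 else 0))) lam) :
    ∫ s, dmTerm μp πp rhat τ s.1.1 ∂sampleMeasure lam μp D
      = Epi lam πp fun p => rhat p * (if τ < impW μp πp p then 1 else 0) := by
  rw [integral_comp_fst_fst_sampleMeasure
    (hdm.congr (ae_of_all _ fun x => (dmTerm_eq x).symm)).aestronglyMeasurable]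
  simp only [dmTerm_eq, Epi]

end

theorem switch_bias_general
    (lam : Measure X) [IsProbabilityMeasure lam] (μp πp : Policy X A)
    (habs : ∀ x a, 0 < πp.prob x a → 0 < μp.prob x a)
    (D : Kernel (X × A) ℝ) [IsMarkovKernel D]
    (rhat : X × A → ℝ)
    (τ : ℝ) (n : ℕ) (hn : 0 < n)
    (hips : Integrable (fun s : (X × A) × ℝ =>
      s.2 * impW μp πp s.1 * (if impW μp πp s.1 ≤ τ then 1 else 0)) (sampleMeasure lam μp D))
    (hvpi : Integrable (fun x => ∑ a, πp.prob x a * rstar D (x, a)) lam)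
    (hlow : Integrable (fun x => ∑ a, πp.prob x a *
      (rstar D (x, a) * (if impW μp πp (x, a) ≤ τ then 1 else 0))) lam)
    (hdm : Integrable (fun x => ∑ a, πp.prob x a *
      (rhat (x, a) * (if τ < impW μp πp (x, a) then 1 else 0))) lam) :
    (∫ ω, switchEst μp πp rhat τ n ω
        ∂(Measure.pi fun _ : Fin n => sampleMeasure lam μp D)) - vpi lam πp D
      = Epi lam πp
          (fun p => (rhat p - rstar D p) * (if τ < impW μp πp p then 1 else 0)) := by
  rw [integral_switchEst hn.ne' hips (integrable_dmTerm (rhat := rhat) hdm),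
    integral_ipsTerm habs hips, integral_dmTerm (rhat := rhat) hdm, add_comm, vpi, ← Epi,
    ← epi_add_sub ?_ ?_ ?_]
  · congr 1; ext p
    rcases lt_or_ge τ (impW μp πp p) with h | h
    · simp [h, not_le.mpr h]
    · simp [h, not_lt.mpr h]
  exacts [hdm, hlow, hvpi]

/-- Bias of the SWITCH estimator. -/
theorem switch_bias
    (lam : Measure X) [IsProbabilityMeasure lam] (μp πp : Policy X A)
    (habs : ∀ x a, 0 < πp.prob x a → 0 < μp.prob x a)
    (D : Kernel (X × A) ℝ) [IsMarkovKernel D]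
    (hDint : ∀ p, Integrable (fun r => r) (D p))
    (rhat : X × A → ℝ) (hrm : Measurable rhat)
    (τ : ℝ) (hτ : 0 < τ) (n : ℕ) (hn : 0 < n)
    (hS : Integrable (switchEst μp πp rhat τ n)
      (Measure.pi fun _ : Fin n => sampleMeasure lam μp D))
    (hips : Integrable (fun s : (X × A) × ℝ =>
      s.2 * impW μp πp s.1 * (if impW μp πp s.1 ≤ τ then 1 else 0)) (sampleMeasure lam μp D))
    (hvpi : Integrable (fun x => ∑ a, πp.prob x a * rstar D (x, a)) lam)
    (hlow : Integrable (fun x => ∑ a, πp.prob x a *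
      (rstar D (x, a) * (if impW μp πp (x, a) ≤ τ then 1 else 0))) lam)
    (hdm : Integrable (fun x => ∑ a, πp.prob x a *
      (rhat (x, a) * (if τ < impW μp πp (x, a) then 1 else 0))) lam) :
    (∫ ω, switchEst μp πp rhat τ n ω
        ∂(Measure.pi fun _ : Fin n => sampleMeasure lam μp D)) - vpi lam πp D
      = Epi lam πp
          (fun p => (rhat p - rstar D p) * (if τ < impW μp πp p then 1 else 0)) :=
  switch_bias_general lam μp πp habs D rhat τ n hn hips hvpi hlow hdm
end

section
/- (Variance bound for the SWITCH estimator.) Fix a reward kernel D ∈ R(σ,Rmax) with mean reward r*(x,a), a measurable reward model r̂ with 0 ≤ r̂(x,a) ≤ Rmax(x,a) for all (x,a), and a threshold τ > 0. On n i.i.d. samples from P_μ^D, the variance of the SWITCH estimator satisfies Var(v̂_SWITCH) ≤ (2/n)·( E_μ[σ²·ρ²·1(ρ ≤ τ)] + E_μ[Rmax²·ρ²·1(ρ ≤ τ)] + E_π[Rmax²·1(ρ > τ)] ). -/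
open MeasureTheory ProbabilityTheory Real
open scoped ENNReal BigOperators Classical

variable {X A : Type*} [MeasurableSpace X] [Fintype A] [Nonempty A]
  [MeasurableSpace A] [MeasurableSingletonClass A]

/-!
The estimator is the empirical mean of `n` i.i.d. copies of the per-sample summand
`F(x, a, r) = r ρ(x,a) 1(ρ(x,a) ≤ τ) + Σ_b r̂(x,b) π(b|x) 1(ρ(x,b) > τ)`, so its variance is
`Var F / n ≤ E[F²] / n`, and `(u + v)² ≤ 2u² + 2v²` splits `E[F²]` into the second moments of the
two parts. Given `(x, a)`, `E[r²] = Var r + r*² ≤ σ² + Rmax²`, which yields the two `E_μ` terms.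
The model part depends on `x` alone, and by Jensen's inequality for `π(·|x)` its square is at most
`E_{b∼π(·|x)}[r̂² 1(ρ > τ)] ≤ E_{b∼π(·|x)}[Rmax² 1(ρ > τ)]`.
-/

lemma ENNReal.ofReal_add_sq_le (a b : ℝ) :
    ENNReal.ofReal ((a + b) ^ 2) ≤ 2 * (ENNReal.ofReal (a ^ 2) + ENNReal.ofReal (b ^ 2)) := by
  rw [← ENNReal.ofReal_add (sq_nonneg a) (sq_nonneg b), ← ENNReal.ofReal_ofNat 2,
    ← ENNReal.ofReal_mul zero_le_two]
  exact ENNReal.ofReal_le_ofReal add_sq_le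

@[fun_prop]
lemma Measurable.ite_le {α : Type*} [MeasurableSpace α] {f g u v : α → ℝ} (hf : Measurable f)
    (hg : Measurable g) (hu : Measurable u) (hv : Measurable v) :
    Measurable fun x => if f x ≤ g x then u x else v x :=
  Measurable.ite (measurableSet_le hf hg) hu hv

@[fun_prop]
lemma Measurable.ite_lt {α : Type*} [MeasurableSpace α] {f g u v : α → ℝ} (hf : Measurable f)
    (hg : Measurable g) (hu : Measurable u) (hv : Measurable v) :
    Measurable fun x => if f x < g x then u x else v x :=
  Measurable.ite (measurableSet_lt hf hg) hu hv

section

variable {Ω : Type*} [MeasurableSpace Ω] {ν : Measure Ω} [IsProbabilityMeasure ν]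

lemma evariance_le_lintegral_sq {F : Ω → ℝ} (hF : AEStronglyMeasurable F ν) :
    evariance F ν ≤ ∫⁻ ω, ENNReal.ofReal (F ω ^ 2) ∂ν := by
  rw [evariance_def' hF]
  refine tsub_le_self.trans_eq (lintegral_congr fun ω => ?_)
  rw [Real.enorm_eq_ofReal_abs, ← ENNReal.ofReal_pow (abs_nonneg _), sq_abs]

lemma variance_mean_pi {ι : Type*} [Fintype ι] {F : Ω → ℝ} (hF : MemLp F 2 ν) :
    variance (fun ω : ι → Ω => (Fintype.card ι : ℝ)⁻¹ * ∑ i, F (ω i)) (Measure.pi fun _ => ν)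
      = variance F ν / Fintype.card ι := by
  have hsum := variance_sum_pi (μ := fun _ : ι => ν) (X := fun _ => F) fun _ => hF
  simp only [Finset.sum_fn, Finset.sum_const, Finset.card_univ, nsmul_eq_mul] at hsum
  rw [variance_const_mul, hsum]
  obtain hι | hι := eq_or_ne (Fintype.card ι : ℝ) 0
  · simp [hι]
  · field_simp

lemma evariance_mean_pi_le {ι : Type*} [Fintype ι] {F : Ω → ℝ} (hF : AEStronglyMeasurable F ν)
    {B : ℝ} (hFB : ∫⁻ ω, ENNReal.ofReal (F ω ^ 2) ∂ν ≤ ENNReal.ofReal B) :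
    evariance (fun ω : ι → Ω => (Fintype.card ι : ℝ)⁻¹ * ∑ i, F (ω i)) (Measure.pi fun _ => ν)
      ≤ ENNReal.ofReal (B / Fintype.card ι) := by
  have hvar : evariance F ν ≤ ENNReal.ofReal B := (evariance_le_lintegral_sq hF).trans hFB
  have hL2 : MemLp F 2 ν := (evariance_lt_top_iff_memLp hF).1 (hvar.trans_lt ENNReal.ofReal_lt_top)
  have hmean : MemLp (fun ω : ι → Ω => (Fintype.card ι : ℝ)⁻¹ * ∑ i, F (ω i)) 2
      (Measure.pi fun _ => ν) :=
    (memLp_finsetSum _ fun i _ =>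
      hL2.comp_measurePreserving (measurePreserving_eval _ i)).const_mul _
  rw [← hmean.ofReal_variance_eq, variance_mean_pi hL2]
  rw [← hL2.ofReal_variance_eq, ENNReal.ofReal_le_ofReal_iff'] at hvar
  exact ENNReal.ofReal_le_ofReal_iff'.2 <| hvar.imp
    (div_le_div_of_nonneg_right · (Nat.cast_nonneg _))
    (div_nonpos_of_nonpos_of_nonneg · (Nat.cast_nonneg _))

end

section

variable {P : Type*} [MeasurableSpace P]

lemma measurable_map_prodMk_kernel (D : Kernel P ℝ) [IsSFiniteKernel D] :
    Measurable fun p : P => (D p).map fun r => (p, r) := by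
  refine Measure.measurable_of_measurable_coe _ fun s hs => ?_
  simp only [Measure.map_apply measurable_prodMk_left hs]
  exact Kernel.measurable_kernel_prodMk_left hs

lemma lintegral_bind_map_prodMk (ν : Measure P) (D : Kernel P ℝ) [IsSFiniteKernel D]
    {h : P × ℝ → ℝ≥0∞} (hh : Measurable h) :
    ∫⁻ z, h z ∂ν.bind (fun p => (D p).map fun r => (p, r)) = ∫⁻ p, ∫⁻ r, h (p, r) ∂D p ∂ν := by
  rw [Measure.lintegral_bind (measurable_map_prodMk_kernel D).aemeasurable hh.aemeasurable]
  exact lintegral_congr fun p => lintegral_map hh measurable_prodMk_left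

lemma lintegral_bind_map_prodMk_fst (ν : Measure P) (D : Kernel P ℝ) [IsMarkovKernel D]
    {h : P → ℝ≥0∞} (hh : Measurable h) :
    ∫⁻ z, h z.1 ∂ν.bind (fun p => (D p).map fun r => (p, r)) = ∫⁻ p, h p ∂ν := by
  simp [lintegral_bind_map_prodMk ν D (h := fun z => h z.1) (hh.comp measurable_fst)]

end

section

variable {X A : Type*} [MeasurableSpace X] [Fintype A]

lemma Policy.sum_ofReal_prob (μp : Policy X A) (x : X) :
    ∑ a, ENNReal.ofReal (μp.prob x a) = 1 := by
  rw [← ENNReal.ofReal_sum_of_nonneg fun a _ => μp.nonneg x a, μp.sum_one, ENNReal.ofReal_one]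

lemma Policy.sq_sum_mul_le (μp : Policy X A) (x : X) (f : A → ℝ) :
    (∑ a, μp.prob x a * f a) ^ 2 ≤ ∑ a, μp.prob x a * f a ^ 2 := by
  have h := Finset.sum_sq_le_sum_mul_sum_of_sq_le_mul Finset.univ (fun a _ => μp.nonneg x a)
    (fun a _ => mul_nonneg (μp.nonneg x a) (sq_nonneg (f a)))
    (r := fun a => μp.prob x a * f a) fun a _ => le_of_eq (by ring)
  rwa [μp.sum_one, one_mul] at h

lemma Emu_nonneg (lam : Measure X) (μp : Policy X A) {f : X × A → ℝ} (hf : ∀ p, 0 ≤ f p) :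
    0 ≤ Emu lam μp f :=
  integral_nonneg fun x => Finset.sum_nonneg fun a _ => mul_nonneg (μp.nonneg x a) (hf _)

lemma ofReal_Emu (lam : Measure X) (μp : Policy X A) {f : X × A → ℝ} (hf : ∀ p, 0 ≤ f p)
    (hfi : Integrable (fun x => ∑ a, μp.prob x a * f (x, a)) lam) :
    ENNReal.ofReal (Emu lam μp f) = ∫⁻ x, ENNReal.ofReal (∑ a, μp.prob x a * f (x, a)) ∂lam :=
  ofReal_integral_eq_lintegral_ofReal hfi
    (ae_of_all _ fun x => Finset.sum_nonneg fun a _ => mul_nonneg (μp.nonneg x a) (hf _))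

variable [MeasurableSpace A]

lemma Policy.measurable_actionMeasure (μp : Policy X A) :
    Measurable fun x : X =>
      Measure.sum fun a : A => ENNReal.ofReal (μp.prob x a) • Measure.dirac ((x, a) : X × A) := by
  refine Measure.measurable_of_measurable_coe _ fun s hs => ?_
  simp only [Measure.sum_apply _ hs, Measure.smul_apply, smul_eq_mul, Measure.dirac_apply' _ hs,
    tsum_fintype]
  refine Finset.measurable_sum _ fun a _ => ?_
  exact (ENNReal.measurable_ofReal.comp (μp.meas a)).mul
    ((measurable_one.indicator hs).comp (measurable_id.prodMk measurable_const))

lemma Policy.lintegral_joint (lam : Measure X) (μp : Policy X A) {h : X × A → ℝ≥0∞}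
    (hh : Measurable h) :
    ∫⁻ p, h p ∂μp.joint lam = ∫⁻ x, ∑ a, ENNReal.ofReal (μp.prob x a) * h (x, a) ∂lam := by
  rw [Policy.joint, Measure.lintegral_bind μp.measurable_actionMeasure.aemeasurable
    hh.aemeasurable]
  refine lintegral_congr fun x => ?_
  simp only [lintegral_sum_measure, tsum_fintype, lintegral_smul_measure, lintegral_dirac' _ hh,
    smul_eq_mul]

lemma Policy.lintegral_joint_context (lam : Measure X) (μp : Policy X A) {h : X → ℝ≥0∞}
    (hh : Measurable h) :
    ∫⁻ p, h p.1 ∂μp.joint lam = ∫⁻ x, h x ∂lam := by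
  rw [μp.lintegral_joint lam (h := fun p => h p.1) (hh.comp measurable_fst)]
  simp [← Finset.sum_mul, μp.sum_ofReal_prob]

instance Policy.isProbabilityMeasure_joint (lam : Measure X) [IsProbabilityMeasure lam]
    (μp : Policy X A) : IsProbabilityMeasure (μp.joint lam) := by
  constructor
  simpa using μp.lintegral_joint_context lam (h := fun _ => 1) measurable_const

instance isProbabilityMeasure_sampleMeasure (lam : Measure X) [IsProbabilityMeasure lam]
    (μp : Policy X A) (D : Kernel (X × A) ℝ) [IsMarkovKernel D] :
    IsProbabilityMeasure (sampleMeasure lam μp D) := by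
  constructor
  simpa [sampleMeasure] using
    lintegral_bind_map_prodMk_fst (μp.joint lam) D (h := fun _ => 1) measurable_const

lemma ofReal_Emu_eq_lintegral_joint (lam : Measure X) (μp : Policy X A) {f : X × A → ℝ}
    (hf : ∀ p, 0 ≤ f p) (hfm : Measurable f)
    (hfi : Integrable (fun x => ∑ a, μp.prob x a * f (x, a)) lam) :
    ENNReal.ofReal (Emu lam μp f) = ∫⁻ p, ENNReal.ofReal (f p) ∂μp.joint lam := by
  rw [ofReal_Emu lam μp hf hfi, μp.lintegral_joint lam hfm.ennreal_ofReal]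
  refine lintegral_congr fun x => ?_
  rw [ENNReal.ofReal_sum_of_nonneg fun a _ => mul_nonneg (μp.nonneg x a) (hf _)]
  simp_rw [ENNReal.ofReal_mul (μp.nonneg x _)]

lemma InRewardClass.ae_lintegral_sq_le {lam : Measure X} {μp : Policy X A}
    {σf Rmax : X × A → ℝ} {D : Kernel (X × A) ℝ} (hD : InRewardClass lam μp σf Rmax D) :
    ∀ᵐ p ∂μp.joint lam,
      ∫⁻ r, ENNReal.ofReal (r ^ 2) ∂D p ≤ ENNReal.ofReal (σf p ^ 2 + Rmax p ^ 2) := by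
  obtain ⟨hD, hL2, hae⟩ := hD
  filter_upwards [hae] with p ⟨hr0, hrR, hvar⟩
  have hmem : MemLp id 2 (D p) := (memLp_two_iff_integrable_sq aestronglyMeasurable_id).2 (hL2 p)
  have hsecond : ∫ r, r ^ 2 ∂D p = variance id (D p) + rstar D p ^ 2 := by
    rw [variance_eq_sub hmem]
    simp [rstar]
  rw [← ofReal_integral_eq_lintegral_ofReal (hL2 p) (ae_of_all _ fun r => sq_nonneg r)]
  exact ENNReal.ofReal_le_ofReal (by nlinarith)

lemma InRewardClass.lintegral_sq_mul_le {lam : Measure X} {μp : Policy X A}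
    {σf Rmax : X × A → ℝ} {D : Kernel (X × A) ℝ} (hD : InRewardClass lam μp σf Rmax D)
    {c : X × A → ℝ} (hc : Measurable c) :
    ∫⁻ z, ENNReal.ofReal ((z.2 * c z.1) ^ 2) ∂sampleMeasure lam μp D
      ≤ ∫⁻ p, ENNReal.ofReal ((σf p ^ 2 + Rmax p ^ 2) * c p ^ 2) ∂μp.joint lam := by
  have : IsMarkovKernel D := hD.1
  rw [sampleMeasure, lintegral_bind_map_prodMk _ _ (by fun_prop)]
  refine lintegral_mono_ae (hD.ae_lintegral_sq_le.mono fun p hp => ?_)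
  calc ∫⁻ r, ENNReal.ofReal ((r * c p) ^ 2) ∂D p
      = (∫⁻ r, ENNReal.ofReal (r ^ 2) ∂D p) * ENNReal.ofReal (c p ^ 2) := by
        simp_rw [mul_pow, ENNReal.ofReal_mul (sq_nonneg _)]
        exact lintegral_mul_const _ (by fun_prop)
    _ ≤ ENNReal.ofReal (σf p ^ 2 + Rmax p ^ 2) * ENNReal.ofReal (c p ^ 2) := by gcongr
    _ = ENNReal.ofReal ((σf p ^ 2 + Rmax p ^ 2) * c p ^ 2) :=
        (ENNReal.ofReal_mul (by positivity)).symm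

variable [MeasurableSingletonClass A]

@[fun_prop]
lemma Policy.measurable_prob_uncurry (μp : Policy X A) :
    Measurable fun p : X × A => μp.prob p.1 p.2 :=
  measurable_from_prod_countable_left μp.meas

@[fun_prop]
lemma measurable_impW (μp πp : Policy X A) : Measurable (impW μp πp) :=
  πp.measurable_prob_uncurry.div μp.measurable_prob_uncurry

end

section

variable {X A : Type*} [MeasurableSpace X] [Fintype A]

noncomputable def clippedWeight (μp πp : Policy X A) (τ : ℝ) (p : X × A) : ℝ :=
  impW μp πp p * (if impW μp πp p ≤ τ then 1 else 0)

noncomputable def switchModelTerm (μp πp : Policy X A) (rhat : X × A → ℝ) (τ : ℝ) (x : X) : ℝ :=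
  ∑ a, rhat (x, a) * πp.prob x a * (if τ < impW μp πp (x, a) then 1 else 0)

noncomputable def switchSummand (μp πp : Policy X A) (rhat : X × A → ℝ) (τ : ℝ)
    (z : (X × A) × ℝ) : ℝ :=
  z.2 * clippedWeight μp πp τ z.1 + switchModelTerm μp πp rhat τ z.1.1

lemma switchEst_eq_mean (μp πp : Policy X A) (rhat : X × A → ℝ) (τ : ℝ) (n : ℕ) :
    switchEst μp πp rhat τ n = fun ω =>
      (Fintype.card (Fin n) : ℝ)⁻¹ * ∑ i, switchSummand μp πp rhat τ (ω i) := by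
  funext ω
  simp only [switchEst, switchSummand, clippedWeight, switchModelTerm, Fintype.card_fin, one_div,
    Finset.sum_add_distrib, mul_add, mul_assoc]

lemma clippedWeight_sq (μp πp : Policy X A) (τ : ℝ) (p : X × A) :
    clippedWeight μp πp τ p ^ 2 = impW μp πp p ^ 2 * (if impW μp πp p ≤ τ then 1 else 0) := by
  unfold clippedWeight
  split_ifs <;> simp

variable [MeasurableSpace A] [MeasurableSingletonClass A]

@[fun_prop]
lemma measurable_clippedWeight (μp πp : Policy X A) (τ : ℝ) :
    Measurable (clippedWeight μp πp τ) := by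
  unfold clippedWeight
  fun_prop

@[fun_prop]
lemma measurable_switchModelTerm (μp πp : Policy X A) {rhat : X × A → ℝ} (hrm : Measurable rhat)
    (τ : ℝ) : Measurable (switchModelTerm μp πp rhat τ) := by
  unfold switchModelTerm
  fun_prop

@[fun_prop]
lemma measurable_switchSummand (μp πp : Policy X A) {rhat : X × A → ℝ} (hrm : Measurable rhat)
    (τ : ℝ) : Measurable (switchSummand μp πp rhat τ) := by
  unfold switchSummand
  fun_prop

lemma lintegral_sq_switchModelTerm_le (lam : Measure X) (μp πp : Policy X A)
    (D : Kernel (X × A) ℝ) [IsMarkovKernel D] {Rmax rhat : X × A → ℝ} (hrm : Measurable rhat)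
    (hrb : ∀ p, 0 ≤ rhat p ∧ rhat p ≤ Rmax p) (τ : ℝ) :
    ∫⁻ z, ENNReal.ofReal (switchModelTerm μp πp rhat τ z.1.1 ^ 2) ∂sampleMeasure lam μp D
      ≤ ∫⁻ x, ENNReal.ofReal
          (∑ a, πp.prob x a * (Rmax (x, a) ^ 2 * (if τ < impW μp πp (x, a) then 1 else 0)))
        ∂lam := by
  rw [sampleMeasure, lintegral_bind_map_prodMk_fst (h := fun p : X × A => ENNReal.ofReal
      (switchModelTerm μp πp rhat τ p.1 ^ 2)) _ _ (by fun_prop),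
    μp.lintegral_joint_context lam
      (h := fun x => ENNReal.ofReal (switchModelTerm μp πp rhat τ x ^ 2)) (by fun_prop)]
  refine lintegral_mono fun x => ENNReal.ofReal_le_ofReal ?_
  calc switchModelTerm μp πp rhat τ x ^ 2
      = (∑ a, πp.prob x a * (rhat (x, a) * (if τ < impW μp πp (x, a) then 1 else 0))) ^ 2 := by
        simp only [switchModelTerm]
        congr 1
        exact Finset.sum_congr rfl fun a _ => by ring
    _ ≤ ∑ a, πp.prob x a * (rhat (x, a) * (if τ < impW μp πp (x, a) then 1 else 0)) ^ 2 :=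
        πp.sq_sum_mul_le x _
    _ ≤ _ := by
        refine Finset.sum_le_sum fun a _ => mul_le_mul_of_nonneg_left ?_ (πp.nonneg x a)
        split_ifs
        · simpa using pow_le_pow_left₀ (hrb _).1 (hrb _).2 2
        · simp

lemma lintegral_sq_switchSummand_le (lam : Measure X) (μp πp : Policy X A)
    {σf Rmax : X × A → ℝ} (hσm : Measurable σf) (hRm : Measurable Rmax)
    {D : Kernel (X × A) ℝ} (hD : InRewardClass lam μp σf Rmax D)
    {rhat : X × A → ℝ} (hrm : Measurable rhat) (hrb : ∀ p, 0 ≤ rhat p ∧ rhat p ≤ Rmax p)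
    (τ : ℝ)
    (hint1 : Integrable (fun x => ∑ a, μp.prob x a *
      (σf (x, a) ^ 2 * impW μp πp (x, a) ^ 2 *
        (if impW μp πp (x, a) ≤ τ then 1 else 0))) lam)
    (hint2 : Integrable (fun x => ∑ a, μp.prob x a *
      (Rmax (x, a) ^ 2 * impW μp πp (x, a) ^ 2 *
        (if impW μp πp (x, a) ≤ τ then 1 else 0))) lam)
    (hint3 : Integrable (fun x => ∑ a, πp.prob x a *
      (Rmax (x, a) ^ 2 * (if τ < impW μp πp (x, a) then 1 else 0))) lam) :
    ∫⁻ z, ENNReal.ofReal (switchSummand μp πp rhat τ z ^ 2) ∂sampleMeasure lam μp D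
      ≤ ENNReal.ofReal (2 *
          (Emu lam μp (fun p => σf p ^ 2 * impW μp πp p ^ 2 *
              (if impW μp πp p ≤ τ then 1 else 0))
            + Emu lam μp (fun p => Rmax p ^ 2 * impW μp πp p ^ 2 *
              (if impW μp πp p ≤ τ then 1 else 0))
            + Epi lam πp (fun p => Rmax p ^ 2 *
              (if τ < impW μp πp p then 1 else 0)))) := by
  have : IsMarkovKernel D := hD.1
  have hf1 : ∀ p, 0 ≤ σf p ^ 2 * impW μp πp p ^ 2 * (if impW μp πp p ≤ τ then 1 else 0) :=
    fun p => by positivity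
  have hf2 : ∀ p, 0 ≤ Rmax p ^ 2 * impW μp πp p ^ 2 * (if impW μp πp p ≤ τ then 1 else 0) :=
    fun p => by positivity
  have hf3 : ∀ p, 0 ≤ Rmax p ^ 2 * (if τ < impW μp πp p then 1 else 0) :=
    fun p => by positivity
  have hweighted : ∫⁻ z, ENNReal.ofReal ((z.2 * clippedWeight μp πp τ z.1) ^ 2)
        ∂sampleMeasure lam μp D
      ≤ ENNReal.ofReal (Emu lam μp (fun p => σf p ^ 2 * impW μp πp p ^ 2 *
            (if impW μp πp p ≤ τ then 1 else 0)))
        + ENNReal.ofReal (Emu lam μp (fun p => Rmax p ^ 2 * impW μp πp p ^ 2 *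
            (if impW μp πp p ≤ τ then 1 else 0))) := by
    refine (hD.lintegral_sq_mul_le (measurable_clippedWeight μp πp τ)).trans_eq ?_
    rw [ofReal_Emu_eq_lintegral_joint lam μp hf1 (by fun_prop) hint1,
      ofReal_Emu_eq_lintegral_joint lam μp hf2 (by fun_prop) hint2,
      ← lintegral_add_left (by fun_prop)]
    refine lintegral_congr fun p => ?_
    rw [← ENNReal.ofReal_add (hf1 p) (hf2 p), clippedWeight_sq]
    ring_nf
  have hmodel := (lintegral_sq_switchModelTerm_le lam μp πp D hrm hrb τ).trans_eq
    (ofReal_Emu lam πp hf3 hint3).symm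
  calc ∫⁻ z, ENNReal.ofReal (switchSummand μp πp rhat τ z ^ 2) ∂sampleMeasure lam μp D
      ≤ ∫⁻ z, 2 * (ENNReal.ofReal ((z.2 * clippedWeight μp πp τ z.1) ^ 2)
          + ENNReal.ofReal (switchModelTerm μp πp rhat τ z.1.1 ^ 2)) ∂sampleMeasure lam μp D :=
        lintegral_mono fun z => ENNReal.ofReal_add_sq_le _ _
    _ = 2 * (∫⁻ z, ENNReal.ofReal ((z.2 * clippedWeight μp πp τ z.1) ^ 2) ∂sampleMeasure lam μp D
          + ∫⁻ z, ENNReal.ofReal (switchModelTerm μp πp rhat τ z.1.1 ^ 2)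
            ∂sampleMeasure lam μp D) := by
        rw [lintegral_const_mul _ (by fun_prop), lintegral_add_left (by fun_prop)]
    _ ≤ 2 * (ENNReal.ofReal (Emu lam μp (fun p => σf p ^ 2 * impW μp πp p ^ 2 *
              (if impW μp πp p ≤ τ then 1 else 0)))
            + ENNReal.ofReal (Emu lam μp (fun p => Rmax p ^ 2 * impW μp πp p ^ 2 *
              (if impW μp πp p ≤ τ then 1 else 0)))
          + ENNReal.ofReal (Emu lam πp (fun p => Rmax p ^ 2 *
              (if τ < impW μp πp p then 1 else 0)))) := by
        gcongr
    -- `Epi` and `Emu` are the same integral, which the final `rfl` uses.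
    _ = _ := by
        have hT1 := Emu_nonneg lam μp hf1
        have hT2 := Emu_nonneg lam μp hf2
        rw [← ENNReal.ofReal_add hT1 hT2, ← ENNReal.ofReal_add (add_nonneg hT1 hT2)
          (Emu_nonneg lam πp hf3), ← ENNReal.ofReal_ofNat 2, ← ENNReal.ofReal_mul zero_le_two]
        rfl

end

theorem switch_variance_bound_general
    (lam : Measure X) [IsProbabilityMeasure lam] (μp πp : Policy X A)
    (σf Rmax : X × A → ℝ) (hσm : Measurable σf) (hRm : Measurable Rmax)
    (D : Kernel (X × A) ℝ) (hD : InRewardClass lam μp σf Rmax D)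
    (rhat : X × A → ℝ) (hrm : Measurable rhat)
    (hrb : ∀ p, 0 ≤ rhat p ∧ rhat p ≤ Rmax p)
    (τ : ℝ) (n : ℕ)
    (hint1 : Integrable (fun x => ∑ a, μp.prob x a *
      (σf (x, a) ^ 2 * impW μp πp (x, a) ^ 2 *
        (if impW μp πp (x, a) ≤ τ then 1 else 0))) lam)
    (hint2 : Integrable (fun x => ∑ a, μp.prob x a *
      (Rmax (x, a) ^ 2 * impW μp πp (x, a) ^ 2 *
        (if impW μp πp (x, a) ≤ τ then 1 else 0))) lam)
    (hint3 : Integrable (fun x => ∑ a, πp.prob x a *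
      (Rmax (x, a) ^ 2 * (if τ < impW μp πp (x, a) then 1 else 0))) lam) :
    evariance (switchEst μp πp rhat τ n)
        (Measure.pi fun _ : Fin n => sampleMeasure lam μp D)
      ≤ ENNReal.ofReal ((2 / n) *
          (Emu lam μp (fun p => σf p ^ 2 * impW μp πp p ^ 2 *
              (if impW μp πp p ≤ τ then 1 else 0))
            + Emu lam μp (fun p => Rmax p ^ 2 * impW μp πp p ^ 2 *
              (if impW μp πp p ≤ τ then 1 else 0))
            + Epi lam πp (fun p => Rmax p ^ 2 *
              (if τ < impW μp πp p then 1 else 0)))) := by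
  have : IsMarkovKernel D := hD.1
  rw [switchEst_eq_mean]
  refine (evariance_mean_pi_le (measurable_switchSummand μp πp hrm τ).aestronglyMeasurable
    (lintegral_sq_switchSummand_le lam μp πp hσm hRm hD hrm hrb τ hint1 hint2 hint3)).trans_eq ?_
  rw [Fintype.card_fin]
  ring_nf

/-- Variance bound for the SWITCH estimator. -/
theorem switch_variance_bound
    (lam : Measure X) [IsProbabilityMeasure lam] (μp πp : Policy X A)
    (habs : ∀ x a, 0 < πp.prob x a → 0 < μp.prob x a)
    (σf Rmax : X × A → ℝ) (hσm : Measurable σf) (hRm : Measurable Rmax)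
    (hσnn : ∀ p, 0 ≤ σf p) (hRnn : ∀ p, 0 ≤ Rmax p)
    (D : Kernel (X × A) ℝ) (hD : InRewardClass lam μp σf Rmax D)
    (rhat : X × A → ℝ) (hrm : Measurable rhat)
    (hrb : ∀ p, 0 ≤ rhat p ∧ rhat p ≤ Rmax p)
    (τ : ℝ) (hτ : 0 < τ) (n : ℕ) (hn : 0 < n)
    (hS : Integrable (switchEst μp πp rhat τ n)
      (Measure.pi fun _ : Fin n => sampleMeasure lam μp D))
    (hint1 : Integrable (fun x => ∑ a, μp.prob x a *
      (σf (x, a) ^ 2 * impW μp πp (x, a) ^ 2 *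
        (if impW μp πp (x, a) ≤ τ then 1 else 0))) lam)
    (hint2 : Integrable (fun x => ∑ a, μp.prob x a *
      (Rmax (x, a) ^ 2 * impW μp πp (x, a) ^ 2 *
        (if impW μp πp (x, a) ≤ τ then 1 else 0))) lam)
    (hint3 : Integrable (fun x => ∑ a, πp.prob x a *
      (Rmax (x, a) ^ 2 * (if τ < impW μp πp (x, a) then 1 else 0))) lam) :
    evariance (switchEst μp πp rhat τ n)
        (Measure.pi fun _ : Fin n => sampleMeasure lam μp D)
      ≤ ENNReal.ofReal ((2 / n) *
          (Emu lam μp (fun p => σf p ^ 2 * impW μp πp p ^ 2 *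
              (if impW μp πp p ≤ τ then 1 else 0))
            + Emu lam μp (fun p => Rmax p ^ 2 * impW μp πp p ^ 2 *
              (if impW μp πp p ≤ τ then 1 else 0))
            + Epi lam πp (fun p => Rmax p ^ 2 *
              (if τ < impW μp πp p then 1 else 0)))) :=
  switch_variance_bound_general lam μp πp σf Rmax hσm hRm D hD rhat hrm hrb τ n hint1 hint2 hint3
end

section
/- (KL divergence between joint distributions with Gaussian reward kernels.) Let ν be a probability measure on a measurable space Z, let σ : Z → (0,∞) and η₁, η₂ : Z → ℝ be measurable with ∫ (η₁(z) − η₂(z))²/(2σ(z)²) dν(z) < ∞. Let P_i (i = 1,2) be the probability measure on Z×ℝ obtained by drawing z ∼ ν and then r ∼ N(η_i(z), σ(z)²) (the real Gaussian with mean η_i(z) and variance σ(z)²). Then D_KL(P₁ ‖ P₂) = ∫ (η₁(z) − η₂(z))² / (2·σ(z)²) dν(z). -/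
open MeasureTheory ProbabilityTheory Real
open scoped ENNReal Classical

/-- Kullback–Leibler divergence: `∫ log(dP/dQ) dP` when `P ≪ Q` and the log-density is
integrable, and `+∞` otherwise. -/
noncomputable def klDiv {α : Type*} [MeasurableSpace α] (P Q : Measure α) : EReal :=
  if P ≪ Q ∧ Integrable (fun x => Real.log (P.rnDeriv Q x).toReal) P
  then ((∫ x, Real.log (P.rnDeriv Q x).toReal ∂P : ℝ) : EReal)
  else ⊤

/-- The joint law of (z, r) with z ∼ ν and r ∼ N(η(z), σ(z)²). -/
noncomputable def gaussianJoint {Z : Type*} [MeasurableSpace Z] (ν : Measure Z)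
    (η σ : Z → ℝ) : Measure (Z × ℝ) :=
  ν.bind fun z => (gaussianReal (η z) ((σ z ^ 2).toNNReal)).map fun r => (z, r)

/-!
Both joint laws are `ν ⊗ₘ κᵢ` with Gaussian kernels of the same variance, and
`N(μ₁, v)` has density `exp ((μ₁ - μ₂) (2x - μ₁ - μ₂) / 2v)` with respect to `N(μ₂, v)`.
This log-density is affine in `x`, so integrating it first against `N(η₁ z, σ z ²)` leaves
`(η₁ z - η₂ z)² / 2σ(z)²`, which is then integrated against `ν`. Integrability comes from the
bound `|log-density| ≤ (η₁ z - η₂ z)² / σ(z)² + (x - η₁ z)² / 2σ(z)²`, whose second term has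
integral `1/2` on every fibre.
-/

open scoped NNReal

lemma klDiv_eq_integral_of_eq_withDensity_exp {α : Type*} [MeasurableSpace α] {P Q : Measure α}
    [SigmaFinite Q] {g : α → ℝ} (hg : Measurable g)
    (hPQ : P = Q.withDensity fun x => ENNReal.ofReal (rexp (g x))) (hint : Integrable g P) :
    klDiv P Q = ((∫ x, g x ∂P : ℝ) : EReal) := by
  have hac : P ≪ Q := hPQ ▸ withDensity_absolutelyContinuous _ _
  have hrn : P.rnDeriv Q =ᵐ[Q] fun x => ENNReal.ofReal (rexp (g x)) :=
    hPQ ▸ Measure.rnDeriv_withDensity Q (by fun_prop)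
  have hlog : (fun x => log (P.rnDeriv Q x).toReal) =ᵐ[P] g := by
    filter_upwards [hac.ae_le hrn] with x hx
    rw [hx, ENNReal.toReal_ofReal (exp_pos _).le, log_exp]
  rw [klDiv, if_pos ⟨hac, hint.congr hlog.symm⟩, integral_congr_ae hlog]

/-- The logarithm of the density of `N(μ₁, v)` with respect to `N(μ₂, v)`. -/
noncomputable def gaussianLLR (μ₁ μ₂ : ℝ) (v : ℝ≥0) (x : ℝ) : ℝ :=
  (μ₁ - μ₂) * (2 * x - μ₁ - μ₂) / (2 * v)

lemma gaussianReal_eq_withDensity_exp_gaussianLLR (μ₁ μ₂ : ℝ) {v : ℝ≥0} (hv : v ≠ 0) :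
    gaussianReal μ₁ v =
      (gaussianReal μ₂ v).withDensity fun x => ENNReal.ofReal (rexp (gaussianLLR μ₁ μ₂ v x)) := by
  rw [gaussianReal_of_var_ne_zero _ hv, gaussianReal_of_var_ne_zero _ hv,
    ← withDensity_mul _ (measurable_gaussianPDF _ _) (by unfold gaussianLLR; fun_prop)]
  congr 1
  funext x
  rw [Pi.mul_apply, gaussianPDF, gaussianPDF, ← ENNReal.ofReal_mul (gaussianPDFReal_nonneg ..),
    gaussianPDFReal, gaussianPDFReal, mul_assoc _ (rexp _), ← exp_add, gaussianLLR]
  have : (v : ℝ) ≠ 0 := by exact_mod_cast hv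
  congr 3
  field_simp
  ring

lemma integral_gaussianLLR (μ₁ μ₂ : ℝ) (v : ℝ≥0) :
    ∫ x, gaussianLLR μ₁ μ₂ v x ∂gaussianReal μ₁ v = (μ₁ - μ₂) ^ 2 / (2 * v) := by
  have haffine : ∀ x, gaussianLLR μ₁ μ₂ v x
      = (μ₁ - μ₂) / v * x - (μ₁ - μ₂) * (μ₁ + μ₂) / (2 * v) := fun x => by
    rw [gaussianLLR]; ring
  have hid : Integrable (fun x => x) (gaussianReal μ₁ v) :=
    (memLp_id_gaussianReal 1).integrable le_rfl
  simp_rw [haffine]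
  rw [integral_sub (hid.const_mul _) (integrable_const _), integral_const_mul,
    integral_id_gaussianReal, integral_const, probReal_univ, one_smul]
  ring

lemma abs_gaussianLLR_le (μ₁ μ₂ : ℝ) {v : ℝ≥0} (hv : v ≠ 0) (x : ℝ) :
    |gaussianLLR μ₁ μ₂ v x| ≤ 2 * ((μ₁ - μ₂) ^ 2 / (2 * v)) + (x - μ₁) ^ 2 / (2 * v) := by
  have hv2 : (0 : ℝ) < 2 * v := by positivity
  rw [← mul_div_assoc, ← add_div, gaussianLLR, abs_div, abs_of_pos hv2,
    div_le_div_iff_of_pos_right hv2, abs_le]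
  constructor <;> nlinarith [sq_nonneg (μ₁ - μ₂ + (x - μ₁)), sq_nonneg (μ₁ - μ₂ - (x - μ₁))]

lemma integrable_sq_sub_gaussianReal (μ : ℝ) (v : ℝ≥0) :
    Integrable (fun x => (x - μ) ^ 2) (gaussianReal μ v) :=
  ((memLp_id_gaussianReal 2).sub (memLp_const μ)).integrable_sq

lemma integral_sq_sub_gaussianReal (μ : ℝ) (v : ℝ≥0) :
    ∫ x, (x - μ) ^ 2 ∂gaussianReal μ v = v := by
  rw [← variance_fun_id_gaussianReal (μ := μ), variance_eq_integral aemeasurable_id',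
    integral_id_gaussianReal]

lemma MeasureTheory.Measure.bind_map_prodMk_eq_compProd {α β : Type*} [MeasurableSpace α]
    [MeasurableSpace β] (μ : Measure α) [SFinite μ] (κ : Kernel α β) [IsSFiniteKernel κ] :
    μ.bind (fun a => (κ a).map (Prod.mk a)) = μ ⊗ₘ κ := by
  rw [Measure.compProd_eq_comp_prod]
  congr 1
  funext a
  rw [Kernel.prod_apply, Kernel.id_apply, Measure.dirac_prod]

lemma MeasureTheory.Integrable.comp_fst_compProd {α β E : Type*} [MeasurableSpace α]
    [MeasurableSpace β] [NormedAddCommGroup E] {μ : Measure α} [SFinite μ] {κ : Kernel α β}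
    [IsMarkovKernel κ] {f : α → E} (hf : Integrable f μ) :
    Integrable (fun p => f p.1) (μ ⊗ₘ κ) := by
  rw [← Measure.fst_compProd μ κ] at hf
  exact hf.comp_measurable measurable_fst

section GaussianKernel

variable {Z : Type*} [MeasurableSpace Z] {ν : Measure Z} {η η₁ η₂ : Z → ℝ} {v : Z → ℝ≥0}

noncomputable def gaussianKernel (η : Z → ℝ) (v : Z → ℝ≥0) (hη : Measurable η)
    (hv : Measurable v) : Kernel Z ℝ where
  toFun z := gaussianReal (η z) (v z)
  measurable' := measurable_gaussianReal.comp (hη.prodMk hv)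

@[simp]
lemma gaussianKernel_apply (hη : Measurable η) (hv : Measurable v) (z : Z) :
    gaussianKernel η v hη hv z = gaussianReal (η z) (v z) :=
  rfl

instance (hη : Measurable η) (hv : Measurable v) : IsMarkovKernel (gaussianKernel η v hη hv) :=
  ⟨fun z => by rw [gaussianKernel_apply]; infer_instance⟩

lemma gaussianJoint_eq_compProd [SFinite ν] {σ : Z → ℝ} (hη : Measurable η) (hσ : Measurable σ) :
    gaussianJoint ν η σ
      = ν ⊗ₘ gaussianKernel η (fun z => (σ z ^ 2).toNNReal) hη (hσ.pow_const 2).real_toNNReal := by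
  rw [gaussianJoint, ← Measure.bind_map_prodMk_eq_compProd]
  rfl

lemma measurable_gaussianLLR_comp (hη₁ : Measurable η₁) (hη₂ : Measurable η₂)
    (hv : Measurable v) :
    Measurable fun p : Z × ℝ => gaussianLLR (η₁ p.1) (η₂ p.1) (v p.1) p.2 := by
  unfold gaussianLLR
  fun_prop

lemma compProd_gaussianKernel_eq_withDensity [SFinite ν] (hη₁ : Measurable η₁)
    (hη₂ : Measurable η₂) (hv : Measurable v) (hv₀ : ∀ z, v z ≠ 0) :
    ν ⊗ₘ gaussianKernel η₁ v hη₁ hv = (ν ⊗ₘ gaussianKernel η₂ v hη₂ hv).withDensity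
      fun p => ENNReal.ofReal (rexp (gaussianLLR (η₁ p.1) (η₂ p.1) (v p.1) p.2)) := by
  set f : Z → ℝ → ℝ≥0∞ := fun z x => ENNReal.ofReal (rexp (gaussianLLR (η₁ z) (η₂ z) (v z) x))
  have hf : Measurable (Function.uncurry f) :=
    (measurable_gaussianLLR_comp hη₁ hη₂ hv).exp.ennreal_ofReal
  have : IsSFiniteKernel ((gaussianKernel η₂ v hη₂ hv).withDensity f) :=
    Kernel.IsSFiniteKernel.withDensity _ fun _ _ => ENNReal.ofReal_ne_top
  have hκ : gaussianKernel η₁ v hη₁ hv = (gaussianKernel η₂ v hη₂ hv).withDensity f :=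
    Kernel.ext fun z => by
      rw [Kernel.withDensity_apply _ hf]
      exact gaussianReal_eq_withDensity_exp_gaussianLLR _ _ (hv₀ z)
  rw [hκ, Measure.compProd_withDensity hf]

lemma integrable_sq_sub_div_compProd_gaussianKernel [IsFiniteMeasure ν] (hη : Measurable η)
    (hv : Measurable v) (hv₀ : ∀ z, v z ≠ 0) :
    Integrable (fun p : Z × ℝ => (p.2 - η p.1) ^ 2 / (2 * v p.1))
      (ν ⊗ₘ gaussianKernel η v hη hv) := by
  rw [Measure.integrable_compProd_iff (Measurable.aestronglyMeasurable (by fun_prop))]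
  refine ⟨ae_of_all _ fun z => ?_, ?_⟩
  · rw [gaussianKernel_apply]
    exact (integrable_sq_sub_gaussianReal (η z) (v z)).div_const (2 * (v z : ℝ))
  have hfibre : ∀ z, ∫ x, ‖(x - η z) ^ 2 / (2 * v z)‖ ∂gaussianKernel η v hη hv z = 1 / 2 := by
    intro z
    have : (v z : ℝ) ≠ 0 := by exact_mod_cast hv₀ z
    have hnorm : ∀ x : ℝ, ‖(x - η z) ^ 2 / (2 * v z)‖ = (x - η z) ^ 2 / (2 * v z) :=
      fun x => norm_of_nonneg (by positivity)
    simp_rw [hnorm]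
    rw [gaussianKernel_apply, integral_div, integral_sq_sub_gaussianReal]
    field_simp
  simp_rw [hfibre]
  exact integrable_const _

variable [IsFiniteMeasure ν] (hη₁ : Measurable η₁) (hη₂ : Measurable η₂) (hv : Measurable v)
  (hv₀ : ∀ z, v z ≠ 0) (hint : Integrable (fun z => (η₁ z - η₂ z) ^ 2 / (2 * v z)) ν)
include hη₁ hη₂ hv hv₀ hint

lemma integrable_gaussianLLR_compProd_gaussianKernel :
    Integrable (fun p : Z × ℝ => gaussianLLR (η₁ p.1) (η₂ p.1) (v p.1) p.2)
      (ν ⊗ₘ gaussianKernel η₁ v hη₁ hv) :=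
  ((hint.const_mul 2).comp_fst_compProd.add
      (integrable_sq_sub_div_compProd_gaussianKernel hη₁ hv hv₀)).mono'
    (measurable_gaussianLLR_comp hη₁ hη₂ hv).aestronglyMeasurable
    (ae_of_all _ fun p => abs_gaussianLLR_le _ _ (hv₀ p.1) p.2)

lemma integral_gaussianLLR_compProd_gaussianKernel :
    ∫ p, gaussianLLR (η₁ p.1) (η₂ p.1) (v p.1) p.2 ∂(ν ⊗ₘ gaussianKernel η₁ v hη₁ hv)
      = ∫ z, (η₁ z - η₂ z) ^ 2 / (2 * v z) ∂ν := by
  rw [Measure.integral_compProd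
    (integrable_gaussianLLR_compProd_gaussianKernel hη₁ hη₂ hv hv₀ hint)]
  simp_rw [gaussianKernel_apply, integral_gaussianLLR]

end GaussianKernel

/-- KL divergence between joint distributions with Gaussian reward kernels. -/
theorem klDiv_gaussianJoint
    {Z : Type*} [MeasurableSpace Z] (ν : Measure Z) [IsProbabilityMeasure ν]
    (σ η₁ η₂ : Z → ℝ) (hσm : Measurable σ) (hσ : ∀ z, 0 < σ z)
    (hη₁ : Measurable η₁) (hη₂ : Measurable η₂)
    (hint : Integrable (fun z => (η₁ z - η₂ z) ^ 2 / (2 * σ z ^ 2)) ν) :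
    klDiv (gaussianJoint ν η₁ σ) (gaussianJoint ν η₂ σ)
      = ((∫ z, (η₁ z - η₂ z) ^ 2 / (2 * σ z ^ 2) ∂ν : ℝ) : EReal) := by
  set v : Z → ℝ≥0 := fun z => (σ z ^ 2).toNNReal
  have hv : Measurable v := (hσm.pow_const 2).real_toNNReal
  have hv₀ : ∀ z, v z ≠ 0 := fun z => (Real.toNNReal_pos.2 (pow_pos (hσ z) 2)).ne'
  have hvσ : ∀ z, (v z : ℝ) = σ z ^ 2 := fun z => Real.coe_toNNReal _ (sq_nonneg _)
  simp_rw [← hvσ] at hint ⊢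
  rw [gaussianJoint_eq_compProd hη₁ hσm, gaussianJoint_eq_compProd hη₂ hσm,
    klDiv_eq_integral_of_eq_withDensity_exp (measurable_gaussianLLR_comp hη₁ hη₂ hv)
      (compProd_gaussianKernel_eq_withDensity hη₁ hη₂ hv hv₀)
      (integrable_gaussianLLR_compProd_gaussianKernel hη₁ hη₂ hv hv₀ hint),
    integral_gaussianLLR_compProd_gaussianKernel hη₁ hη₂ hv hv₀ hint]
end
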